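/- arXiv:1203.5071 — 2 statements merged into one kernel-verified Lean document; each statement's English description precedes it below -/
import Mathlib

section
/- Let C and D be complete categories, let E be a category, and let T : C ⥤ D ⥤ E be a functor which is divisible on both sides, i.e. for every object X of C the functor T.obj X : D ⥤ E has a right adjoint, and for every object Y of D the functor C ⥤ E, X ↦ (T.obj X).obj Y, has a right adjoint. For small categories J₁ and J₂, define the external tensor of X : J₁ ⥤ C and Y : J₂ ⥤ D to be the functor X ⊠ Y : J₁ × J₂ ⥤ E with (X ⊠ Y).obj (j₁, j₂) = (T.obj (X.obj j₁)).obj (Y.obj j₂) (acting on morphisms in the evident way, and functorially in X and Y). Then for every X : J₁ ⥤ C the functor (J₂ ⥤ D) ⥤ (J₁ × J₂ ⥤ E), Y ↦ X ⊠ Y, has a right adjoint, and for every Y : J₂ ⥤ D the functor (J₁ ⥤ C) ⥤ (J₁ × J₂ ⥤ E), X ↦ X ⊠ Y, has a right adjoint. -/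
open CategoryTheory CategoryTheory.Limits

universe v u₁ u₂ u₃

namespace ExternalTensorStatement

section Pointwise

open Opposite

variable {A : Type u₁} [Category.{v} A] {E : Type u₃} [Category.{v} E]
  {J : Type v} [SmallCategory J]

lemma homEquiv_conjugateEquiv {B : Type u₂} [Category.{v} B]
    {L₁ L₂ : B ⥤ E} {R₁ R₂ : E ⥤ B} (adj₁ : L₁ ⊣ R₁) (adj₂ : L₂ ⊣ R₂)
    (α : L₂ ⟶ L₁) {c : B} {d : E} (g : L₁.obj c ⟶ d) :
    (adj₁.homEquiv c d) g ≫ (conjugateEquiv adj₁ adj₂ α).app d =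
      (adj₂.homEquiv c d) (α.app c ≫ g) := by
  rw [Adjunction.homEquiv_unit, Adjunction.homEquiv_unit, Category.assoc,
    (conjugateEquiv adj₁ adj₂ α).naturality g, ← Category.assoc, unit_conjugateEquiv]
  simp

variable (G : A ⥤ J ⥤ E) {R : J → (E ⥤ A)}
  (adj : ∀ j, (G ⋙ (evaluation J E).obj j) ⊣ R j)

/-- The pointwise right adjoints assembled into a functor `Jᵒᵖ ⥤ (E ⥤ A)`. -/
@[simps]
def pointwiseΦ : Jᵒᵖ ⥤ E ⥤ A where
  obj i := R i.unop
  map {i i'} f := conjugateEquiv (adj i.unop) (adj i'.unop)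
    (Functor.whiskerLeft G ((evaluation J E).map f.unop))
  map_id i := by
    have : Functor.whiskerLeft G ((evaluation J E).map (𝟙 i).unop) =
        𝟙 (G ⋙ (evaluation J E).obj i.unop) := by aesop_cat
    rw [this, conjugateEquiv_id]
  map_comp {i i' i''} f g := by
    rw [conjugateEquiv_comp (adj i.unop) (adj i'.unop) (adj i''.unop)
      (Functor.whiskerLeft G ((evaluation J E).map f.unop))
      (Functor.whiskerLeft G ((evaluation J E).map g.unop))]
    congr 1
    aesop_cat

variable [HasLimits A]

/-- Object part of the right adjoint: an end. -/
noncomputable def pointwiseRObj (H : J ⥤ E) : A :=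
  end_ (pointwiseΦ G adj ⋙ (Functor.whiskeringLeft J E A).obj H)

/-- The adjunction equivalence for the pointwise right adjoint. -/
noncomputable def pointwiseEquiv (a : A) (H : J ⥤ E) :
    (G.obj a ⟶ H) ≃ (a ⟶ pointwiseRObj G adj H) where
  toFun α := end_.lift (fun j => ((adj j).homEquiv a (H.obj j)) (α.app j)) (by
    intro i j g
    show ((adj i).homEquiv a (H.obj i)) (α.app i) ≫ (R i).map (H.map g) =
      ((adj j).homEquiv a (H.obj j)) (α.app j) ≫
        ((conjugateEquiv (adj j) (adj i))
          (Functor.whiskerLeft G ((evaluation J E).map g))).app (H.obj j)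
    rw [← Adjunction.homEquiv_naturality_right, homEquiv_conjugateEquiv]
    congr 1
    simpa using (α.naturality g).symm)
  invFun φ :=
    { app := fun j => ((adj j).homEquiv a (H.obj j)).symm
        (φ ≫ end_.π (pointwiseΦ G adj ⋙ (Functor.whiskeringLeft J E A).obj H) j)
      naturality := by
        intro i j g
        apply ((adj i).homEquiv a (H.obj j)).injective
        have h2 := homEquiv_conjugateEquiv (adj j) (adj i)
            (Functor.whiskerLeft G ((evaluation J E).map g)) (c := a)
            (((adj j).homEquiv a (H.obj j)).symm
              (φ ≫ end_.π (pointwiseΦ G adj ⋙ (Functor.whiskeringLeft J E A).obj H) j))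
        rw [Equiv.apply_symm_apply] at h2
        have hθ : (Functor.whiskerLeft G ((evaluation J E).map g)).app a = (G.obj a).map g := rfl
        rw [hθ] at h2
        rw [← h2, Adjunction.homEquiv_naturality_right, Equiv.apply_symm_apply]
        have hc : end_.π (pointwiseΦ G adj ⋙ (Functor.whiskeringLeft J E A).obj H) i ≫
            (R i).map (H.map g) =
            end_.π (pointwiseΦ G adj ⋙ (Functor.whiskeringLeft J E A).obj H) j ≫
              ((conjugateEquiv (adj j) (adj i))
                (Functor.whiskerLeft G ((evaluation J E).map g))).app (H.obj j) :=
          end_.condition (pointwiseΦ G adj ⋙ (Functor.whiskeringLeft J E A).obj H) g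
        erw [Category.assoc, Category.assoc, hc]
        rfl }
  left_inv α := by
    ext j
    simp
    erw [end_.lift_π]
    simp
  right_inv φ := by
    apply end_.hom_ext
    intro j
    simp
    exact end_.lift_π _ _ j

/-- A functor into a functor category whose compositions with evaluations are left
adjoints is itself a left adjoint, provided the domain is complete. -/
lemma isLeftAdjoint_of_pointwise (h : ∀ j, (G ⋙ (evaluation J E).obj j).IsLeftAdjoint) :
    G.IsLeftAdjoint := by
  have adj : ∀ j, (G ⋙ (evaluation J E).obj j) ⊣ (G ⋙ (evaluation J E).obj j).rightAdjoint :=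
    fun j => Adjunction.ofIsLeftAdjoint _
  refine ⟨_, ⟨Adjunction.adjunctionOfEquivRight
    (fun a H => pointwiseEquiv G adj a H) ?_⟩⟩
  intro a' a H f g
  apply end_.hom_ext
  intro j
  simp only [pointwiseEquiv, Equiv.coe_fn_mk, Category.assoc, end_.lift_π]
  have key : ∀ (b : A) (α : G.obj b ⟶ H), pointwiseEquiv G adj b H α ≫
      end_.π (pointwiseΦ G adj ⋙ (Functor.whiskeringLeft J E A).obj H) j =
      (adj j).homEquiv b (H.obj j) (α.app j) := fun b α => by
    exact end_.lift_π _ (pointwiseEquiv._proof_1 G adj b H α) j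
  refine (key a' _).trans ?_
  refine Eq.trans ?_ ((Category.assoc _ _ _).trans (congrArg (f ≫ ·) (key a g))).symm
  show ((adj j).homEquiv a' (H.obj j))
      ((G ⋙ (evaluation J E).obj j).map f ≫ g.app j) =
    f ≫ ((adj j).homEquiv a (H.obj j)) (g.app j)
  rw [Adjunction.homEquiv_naturality_left]

end Pointwise

variable {C : Type u₁} [Category.{v} C] {D : Type u₂} [Category.{v} D]
  {E : Type u₃} [Category.{v} E]
variable {J₁ J₂ : Type v} [SmallCategory J₁] [SmallCategory J₂]

/-- The external tensor `X ⊠ Y : J₁ × J₂ ⥤ E` of diagrams `X : J₁ ⥤ C` and `Y : J₂ ⥤ D`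
along a two-variable functor `T : C ⥤ D ⥤ E`, with
`(X ⊠ Y).obj (j₁, j₂) = (T.obj (X.obj j₁)).obj (Y.obj j₂)`. -/
def extTensor (T : C ⥤ D ⥤ E) (X : J₁ ⥤ C) (Y : J₂ ⥤ D) : J₁ × J₂ ⥤ E :=
  X.prod Y ⋙ Functor.uncurry.obj T

/-- The external tensor as a functor in the second variable: `Y ↦ X ⊠ Y`. -/
def extTensorRight (T : C ⥤ D ⥤ E) (X : J₁ ⥤ C) :
    (J₂ ⥤ D) ⥤ (J₁ × J₂ ⥤ E) where
  obj Y := extTensor T X Y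
  map τ := Functor.whiskerRight (NatTrans.prod (𝟙 X) τ) (Functor.uncurry.obj T)
  map_comp f g := by
    ext j
    dsimp only [extTensor, Functor.comp_obj, Functor.comp_map] at *
    simp only [Functor.whiskerRight_app, NatTrans.comp_app, Functor.comp_obj]
    rw [← Functor.map_comp]
    congr 1
    ext <;> simp [NatTrans.prod]

/-- The external tensor as a functor in the first variable: `X ↦ X ⊠ Y`. -/
def extTensorLeft (T : C ⥤ D ⥤ E) (Y : J₂ ⥤ D) :
    (J₁ ⥤ C) ⥤ (J₁ × J₂ ⥤ E) where
  obj X := extTensor T X Y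
  map σ := Functor.whiskerRight (NatTrans.prod σ (𝟙 Y)) (Functor.uncurry.obj T)
  map_comp f g := by
    ext j
    dsimp only [extTensor, Functor.comp_obj, Functor.comp_map] at *
    simp only [Functor.whiskerRight_app, NatTrans.comp_app, Functor.comp_obj]
    rw [← Functor.map_comp]
    congr 1
    ext <;> simp [NatTrans.prod]

/-- If `C` and `D` are complete and `T : C ⥤ D ⥤ E` is divisible on both sides, then the
external tensor of diagrams is divisible on both sides: for each `X : J₁ ⥤ C` the functor
`Y ↦ X ⊠ Y` has a right adjoint, and for each `Y : J₂ ⥤ D` the functor `X ↦ X ⊠ Y` has a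
right adjoint. -/
theorem extTensor_divisible [HasLimits C] [HasLimits D] (T : C ⥤ D ⥤ E)
    (h₁ : ∀ X : C, (T.obj X).IsLeftAdjoint)
    (h₂ : ∀ Y : D, (T.flip.obj Y).IsLeftAdjoint) :
    (∀ X : J₁ ⥤ C, (extTensorRight (J₂ := J₂) T X).IsLeftAdjoint) ∧
      (∀ Y : J₂ ⥤ D, (extTensorLeft (J₁ := J₁) T Y).IsLeftAdjoint) := by
  constructor
  · intro X
    refine isLeftAdjoint_of_pointwise _ ?_
    rintro ⟨j₁, j₂⟩
    have e : (evaluation J₂ D).obj j₂ ⋙ T.obj (X.obj j₁) ≅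
        extTensorRight (J₂ := J₂) T X ⋙ (evaluation (J₁ × J₂) E).obj (j₁, j₂) :=
      NatIso.ofComponents (fun Y => Iso.refl _) (by
        intro Y Y' τ
        simp [extTensorRight, extTensor, Functor.uncurry])
    have := h₁ (X.obj j₁)
    exact Functor.isLeftAdjoint_of_iso e
  · intro Y
    refine isLeftAdjoint_of_pointwise _ ?_
    rintro ⟨j₁, j₂⟩
    have e : (evaluation J₁ C).obj j₁ ⋙ T.flip.obj (Y.obj j₂) ≅
        extTensorLeft (J₁ := J₁) T Y ⋙ (evaluation (J₁ × J₂) E).obj (j₁, j₂) :=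
      NatIso.ofComponents (fun X => Iso.refl _) (by
        intro X X' σ
        simp [extTensorLeft, extTensor, Functor.uncurry])
    have := h₂ (Y.obj j₂)
    exact Functor.isLeftAdjoint_of_iso e

end ExternalTensorStatement
end

section
/- Let M and N be model categories, let γ_M : M ⥤ Ho(M) and γ_N : N ⥤ Ho(N) be localizations at the respective classes of weak equivalences, and let F, G : M ⥤ N be left Brown functors (each sends weak equivalences between cofibrant objects to weak equivalences). Let τ : F ⟶ G be a left Quillen homotopy, i.e. a natural transformation whose component τ_X is a weak equivalence for every cofibrant object X of M. Let (LF, α) be a right Kan extension of F ⋙ γ_N along γ_M and (LG, β) a right Kan extension of G ⋙ γ_N along γ_M. Then the unique natural transformation Lτ : LF ⟶ LG satisfying (whiskerLeft γ_M Lτ) ≫ β = α ≫ (whiskerRight τ γ_N), given by the universal property of the right Kan extension (LG, β), is a natural isomorphism. -/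
open CategoryTheory CategoryTheory.Limits

universe v u v₁ u₁ v₂ u₂ v₃ u₃ v₄ u₄

namespace ModelCategoryStatement

variable {M : Type u} [Category.{v} M]

/-- `f` is a retract of `g`: there are commuting squares exhibiting `f` as a retract
of `g` in the arrow category. -/
def IsRetractOf {X Y X' Y' : M} (f : X ⟶ Y) (g : X' ⟶ Y') : Prop :=
  ∃ (i : X ⟶ X') (r : X' ⟶ X) (i' : Y ⟶ Y') (r' : Y' ⟶ Y),
    i ≫ r = 𝟙 X ∧ i' ≫ r' = 𝟙 Y ∧ i ≫ g = f ≫ i' ∧ g ≫ r' = r ≫ f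

/-- A model category: a category with finite limits and colimits, equipped with three
classes of morphisms (weak equivalences, cofibrations, fibrations) satisfying two-out-of-
three, closure under retracts, the lifting axioms and the factorization axioms. -/
class ModelCategory (M : Type u) [Category.{v} M] where
  weq : MorphismProperty M
  cof : MorphismProperty M
  fib : MorphismProperty M
  hasFiniteLimits : HasFiniteLimits M
  hasFiniteColimits : HasFiniteColimits M
  weq_twoOutOfThree : weq.HasTwoOutOfThreeProperty
  weq_retract : ∀ {X Y X' Y' : M} (f : X ⟶ Y) (g : X' ⟶ Y'),
    IsRetractOf f g → weq g → weq f
  cof_retract : ∀ {X Y X' Y' : M} (f : X ⟶ Y) (g : X' ⟶ Y'),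
    IsRetractOf f g → cof g → cof f
  fib_retract : ∀ {X Y X' Y' : M} (f : X ⟶ Y) (g : X' ⟶ Y'),
    IsRetractOf f g → fib g → fib f
  lift_cof_trivFib : ∀ {A B X Y : M} (i : A ⟶ B) (p : X ⟶ Y),
    cof i → fib p → weq p → HasLiftingProperty i p
  lift_trivCof_fib : ∀ {A B X Y : M} (i : A ⟶ B) (p : X ⟶ Y),
    cof i → weq i → fib p → HasLiftingProperty i p
  fact_cof_trivFib : ∀ {X Y : M} (f : X ⟶ Y),
    ∃ (Z : M) (g : X ⟶ Z) (h : Z ⟶ Y), cof g ∧ fib h ∧ weq h ∧ g ≫ h = f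
  fact_trivCof_fib : ∀ {X Y : M} (f : X ⟶ Y),
    ∃ (Z : M) (g : X ⟶ Z) (h : Z ⟶ Y), cof g ∧ weq g ∧ fib h ∧ g ≫ h = f

attribute [instance] ModelCategory.hasFiniteLimits ModelCategory.hasFiniteColimits

variable (M) in
/-- The weak equivalences of a model category. -/
abbrev weq [ModelCategory M] : MorphismProperty M := ModelCategory.weq

variable (M) in
/-- The cofibrations of a model category. -/
abbrev cof [ModelCategory M] : MorphismProperty M := ModelCategory.cof

variable (M) in
/-- The fibrations of a model category. -/
abbrev fib [ModelCategory M] : MorphismProperty M := ModelCategory.fib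

/-- An object is cofibrant if the map from the initial object is a cofibration. -/
def Cofibrant [ModelCategory M] (X : M) : Prop :=
  cof M (initial.to X)

/-- An object is fibrant if the map to the terminal object is a fibration. -/
def Fibrant [ModelCategory M] (X : M) : Prop :=
  fib M (terminal.from X)


attribute [instance] ModelCategory.weq_twoOutOfThree

section Aux

variable {M : Type u₁} [Category.{v₁} M] [ModelCategory M]

lemma weq_id (A : M) : weq M (𝟙 A) := by
  obtain ⟨Z, g, h, _, hgw, _, fac⟩ := ModelCategory.fact_trivCof_fib (𝟙 A)
  exact ModelCategory.weq_retract _ g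
    ⟨𝟙 A, 𝟙 A, g, h, by simp, fac, by simp, by rw [fac]; simp⟩ hgw

lemma lift_sq {A B X Y : M} (i : A ⟶ B) (p : X ⟶ Y) (hi : cof M i) (hpf : fib M p)
    (hpw : weq M p) (f : A ⟶ X) (g : B ⟶ Y) (w : f ≫ p = i ≫ g) :
    ∃ l : B ⟶ X, i ≫ l = f ∧ l ≫ p = g := by
  haveI := ModelCategory.lift_cof_trivFib i p hi hpf hpw
  have sq : CommSq f i p g := ⟨w⟩
  exact ⟨sq.lift, sq.fac_left, sq.fac_right⟩

lemma cof_of_llp {A B : M} (i : A ⟶ B)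
    (h : ∀ {X Y : M} (p : X ⟶ Y), fib M p → weq M p → ∀ (f : A ⟶ X) (g : B ⟶ Y),
      f ≫ p = i ≫ g → ∃ l : B ⟶ X, i ≫ l = f ∧ l ≫ p = g) : cof M i := by
  obtain ⟨Z, c, q, hc, hqf, hqw, fac⟩ := ModelCategory.fact_cof_trivFib i
  obtain ⟨k, hk1, hk2⟩ := h q hqf hqw c (𝟙 B) (by rw [fac, Category.comp_id])
  exact ModelCategory.cof_retract i c
    ⟨𝟙 A, 𝟙 A, k, q, by simp, hk2, by rw [Category.id_comp, ← hk1],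
      by rw [fac, Category.id_comp]⟩ hc

lemma cof_comp {A B C' : M} {i : A ⟶ B} {j : B ⟶ C'} (hi : cof M i) (hj : cof M j) :
    cof M (i ≫ j) := by
  apply cof_of_llp
  intro X Y p hpf hpw f g w
  obtain ⟨l1, h1, h2⟩ := lift_sq i p hi hpf hpw f (j ≫ g) (by rw [w, Category.assoc])
  obtain ⟨l2, h3, h4⟩ := lift_sq j p hj hpf hpw l1 g h2
  exact ⟨l2, by rw [Category.assoc, h3, h1], h4⟩

lemma cof_inl {A : M} (hA : Cofibrant A) : cof M (coprod.inl : A ⟶ A ⨿ A) := by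
  apply cof_of_llp
  intro X Y p hpf hpw f g w
  obtain ⟨m, -, hm⟩ := lift_sq (initial.to A) p hA hpf hpw (initial.to X)
    (coprod.inr ≫ g) (initial.hom_ext _ _)
  refine ⟨coprod.desc f m, coprod.inl_desc _ _, coprod.hom_ext ?_ ?_⟩
  · rw [coprod.inl_desc_assoc, w]
  · rw [coprod.inr_desc_assoc, hm]

lemma cof_inr {A : M} (hA : Cofibrant A) : cof M (coprod.inr : A ⟶ A ⨿ A) := by
  apply cof_of_llp
  intro X Y p hpf hpw f g w
  obtain ⟨m, -, hm⟩ := lift_sq (initial.to A) p hA hpf hpw (initial.to X)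
    (coprod.inl ≫ g) (initial.hom_ext _ _)
  refine ⟨coprod.desc m f, coprod.inr_desc _ _, coprod.hom_ext ?_ ?_⟩
  · rw [coprod.inl_desc_assoc, hm]
  · rw [coprod.inr_desc_assoc, w]

lemma cofibrant_of_cof {A B : M} (hA : Cofibrant A) (i : A ⟶ B) (hi : cof M i) :
    Cofibrant B := by
  show cof M (initial.to B)
  rw [initial.hom_ext (initial.to B) (initial.to A ≫ i)]
  exact cof_comp hA hi

lemma cofibrant_coprod_self {A : M} (hA : Cofibrant A) : Cofibrant (A ⨿ A) :=
  cofibrant_of_cof hA coprod.inl (cof_inl hA)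

variable {N : Type u₂} [Category.{v₂} N] [ModelCategory N]
variable {HN : Type u₄} [Category.{v₄} HN] (γN : N ⥤ HN) [γN.IsLocalization (weq N)]

/-- Key coherence lemma: two lifts of the same map through a trivial fibration
become equal after applying a left Brown functor and localizing. -/
lemma brown_coherence (F : M ⥤ N)
    (hF : ∀ {X Y : M} (w : X ⟶ Y), weq M w → Cofibrant X → Cofibrant Y →
      weq N (F.map w))
    {A W Z : M} (hA : Cofibrant A) (hW : Cofibrant W)
    (p : W ⟶ Z) (hpf : fib M p) (hpw : weq M p)
    (l l' : A ⟶ W) (h : l ≫ p = l' ≫ p) :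
    γN.map (F.map l) = γN.map (F.map l') := by
  obtain ⟨C, c, q, hc, hqf, hqw, fac⟩ :=
    ModelCategory.fact_cof_trivFib (coprod.desc (𝟙 A) (𝟙 A))
  have hi0q : (coprod.inl ≫ c) ≫ q = 𝟙 A := by
    rw [Category.assoc, fac, coprod.inl_desc]
  have hi1q : (coprod.inr ≫ c) ≫ q = 𝟙 A := by
    rw [Category.assoc, fac, coprod.inr_desc]
  have hCcof : Cofibrant C := cofibrant_of_cof (cofibrant_coprod_self hA) c hc
  have w : coprod.desc l l' ≫ p = c ≫ (q ≫ (l ≫ p)) := by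
    apply coprod.hom_ext
    · rw [coprod.inl_desc_assoc, ← Category.assoc, ← Category.assoc, hi0q,
        Category.id_comp]
    · rw [coprod.inr_desc_assoc, ← Category.assoc, ← Category.assoc, hi1q,
        Category.id_comp, h]
  obtain ⟨H, hH, -⟩ := lift_sq c p hc hpf hpw (coprod.desc l l') (q ≫ (l ≫ p)) w
  have h0 : (coprod.inl ≫ c) ≫ H = l := by rw [Category.assoc, hH, coprod.inl_desc]
  have h1 : (coprod.inr ≫ c) ≫ H = l' := by rw [Category.assoc, hH, coprod.inr_desc]
  haveI hq : IsIso (γN.map (F.map q)) :=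
    Localization.inverts γN (weq N) _ (hF q hqw hCcof hA)
  have e0 : γN.map (F.map (coprod.inl ≫ c)) ≫ γN.map (F.map q) = 𝟙 _ := by
    rw [← γN.map_comp, ← F.map_comp, hi0q, F.map_id, γN.map_id]
  have e1 : γN.map (F.map (coprod.inr ≫ c)) ≫ γN.map (F.map q) = 𝟙 _ := by
    rw [← γN.map_comp, ← F.map_comp, hi1q, F.map_id, γN.map_id]
  have key : γN.map (F.map (coprod.inl ≫ c)) = γN.map (F.map (coprod.inr ≫ c)) :=
    (cancel_mono (γN.map (F.map q))).1 (e0.trans e1.symm)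
  rw [← h0, ← h1]
  simp only [Functor.map_comp] at key ⊢
  rw [key]

/-- Existence of cofibrant replacements. -/
lemma exists_rep (X : M) :
    ∃ (QX : M) (p : QX ⟶ X), Cofibrant QX ∧ fib M p ∧ weq M p := by
  obtain ⟨Z, g, h, hg, hh, hhw, -⟩ := ModelCategory.fact_cof_trivFib (initial.to X)
  refine ⟨Z, h, ?_, hh, hhw⟩
  show cof M (initial.to Z)
  rw [initial.hom_ext (initial.to Z) g]
  exact hg

/-- A chosen cofibrant replacement object. -/
noncomputable def repObj (X : M) : M := (exists_rep X).choose

/-- The chosen trivial fibration from the cofibrant replacement. -/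
noncomputable def repMap (X : M) : repObj X ⟶ X := (exists_rep X).choose_spec.choose

lemma repObj_cofibrant (X : M) : Cofibrant (repObj X) :=
  (exists_rep X).choose_spec.choose_spec.1

lemma repMap_fib (X : M) : fib M (repMap X) :=
  (exists_rep X).choose_spec.choose_spec.2.1

lemma repMap_weq (X : M) : weq M (repMap X) :=
  (exists_rep X).choose_spec.choose_spec.2.2

lemma exists_repLift {X Y : M} (f : X ⟶ Y) :
    ∃ g : repObj X ⟶ repObj Y, g ≫ repMap Y = repMap X ≫ f := by
  obtain ⟨l, -, hl⟩ := lift_sq (initial.to (repObj X)) (repMap Y)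
    (repObj_cofibrant X) (repMap_fib Y) (repMap_weq Y) (initial.to (repObj Y))
    (repMap X ≫ f) (initial.hom_ext _ _)
  exact ⟨l, hl⟩

/-- A chosen lift of a morphism to the cofibrant replacements. -/
noncomputable def repLift {X Y : M} (f : X ⟶ Y) : repObj X ⟶ repObj Y :=
  (exists_repLift f).choose

lemma repLift_fac {X Y : M} (f : X ⟶ Y) :
    repLift f ≫ repMap Y = repMap X ≫ f :=
  (exists_repLift f).choose_spec

/-- The naive point-set-level derived functor `X ↦ γN (F (Q X))`. -/
noncomputable def derivedPre (F : M ⥤ N)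
    (hF : ∀ {X Y : M} (w : X ⟶ Y), weq M w → Cofibrant X → Cofibrant Y →
      weq N (F.map w)) : M ⥤ HN where
  obj X := γN.obj (F.obj (repObj X))
  map {X Y} f := γN.map (F.map (repLift f))
  map_id X := by
    have := brown_coherence γN F hF (repObj_cofibrant X) (repObj_cofibrant X)
      (repMap X) (repMap_fib X) (repMap_weq X) (repLift (𝟙 X)) (𝟙 (repObj X))
      (by rw [repLift_fac, Category.comp_id, Category.id_comp])
    rw [this, F.map_id, γN.map_id]
  map_comp {X Y Z} f g := by
    have := brown_coherence γN F hF (repObj_cofibrant X) (repObj_cofibrant Z)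
      (repMap Z) (repMap_fib Z) (repMap_weq Z) (repLift (f ≫ g))
      (repLift f ≫ repLift g)
      (by rw [repLift_fac, Category.assoc, repLift_fac, ← Category.assoc,
        ← Category.assoc, repLift_fac])
    rw [this, F.map_comp, γN.map_comp]

lemma derivedPre_inverts (F : M ⥤ N)
    (hF : ∀ {X Y : M} (w : X ⟶ Y), weq M w → Cofibrant X → Cofibrant Y →
      weq N (F.map w)) : (weq M).IsInvertedBy (derivedPre γN F hF) := by
  intro X Y w hw
  have h1 : weq M (repLift w ≫ repMap Y) := by
    rw [repLift_fac]
    exact MorphismProperty.comp_mem _ _ _ (repMap_weq X) hw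
  have h2 : weq M (repLift w) :=
    MorphismProperty.of_postcomp (W := weq M) _ (repMap Y) (repMap_weq Y) h1
  exact Localization.inverts γN (weq N) _
    (hF _ h2 (repObj_cofibrant X) (repObj_cofibrant Y))

/-- The comparison map `γN (F (Q X)) ⟶ γN (F X)`. -/
noncomputable def derivedPreCounit (F : M ⥤ N)
    (hF : ∀ {X Y : M} (w : X ⟶ Y), weq M w → Cofibrant X → Cofibrant Y →
      weq N (F.map w)) : derivedPre γN F hF ⟶ F ⋙ γN where
  app X := γN.map (F.map (repMap X))
  naturality X Y f := by
    dsimp [derivedPre]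
    rw [← γN.map_comp, ← F.map_comp, repLift_fac, F.map_comp, γN.map_comp]

variable {HM : Type u₃} [Category.{v₃} HM] (γM : M ⥤ HM) [γM.IsLocalization (weq M)]

lemma derived_desc (F : M ⥤ N)
    (hF : ∀ {X Y : M} (w : X ⟶ Y), weq M w → Cofibrant X → Cofibrant Y →
      weq N (F.map w))
    (E'' : HM ⥤ HN) (ε'' : γM ⋙ E'' ⟶ F ⋙ γN) :
    ∃ μ : γM ⋙ E'' ⟶ derivedPre γN F hF,
      μ ≫ derivedPreCounit γN F hF = ε'' := by
  haveI : ∀ X : M, IsIso (γM.map (repMap X)) :=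
    fun X => Localization.inverts γM (weq M) _ (repMap_weq X)
  refine ⟨{ app := fun X => inv (E''.map (γM.map (repMap X))) ≫ ε''.app (repObj X)
            naturality := ?_ }, ?_⟩
  · intro X Y f
    dsimp [derivedPre]
    have hnat := ε''.naturality (repLift f)
    dsimp at hnat
    rw [Category.assoc, ← hnat, ← Category.assoc, ← Category.assoc]
    congr 1
    rw [IsIso.comp_inv_eq, Category.assoc, IsIso.eq_inv_comp, ← E''.map_comp,
      ← E''.map_comp, ← γM.map_comp, ← γM.map_comp, repLift_fac]
  · ext X
    dsimp [derivedPreCounit]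
    have hnat := ε''.naturality (repMap X)
    dsimp at hnat
    exact (Category.assoc _ _ _).trans ((IsIso.inv_comp_eq _).mpr hnat.symm)

lemma derived_desc_unique (F : M ⥤ N)
    (hF : ∀ {X Y : M} (w : X ⟶ Y), weq M w → Cofibrant X → Cofibrant Y →
      weq N (F.map w))
    (E'' : HM ⥤ HN) (μ₁ μ₂ : γM ⋙ E'' ⟶ derivedPre γN F hF)
    (h : μ₁ ≫ derivedPreCounit γN F hF = μ₂ ≫ derivedPreCounit γN F hF) :
    μ₁ = μ₂ := by
  have hcof : ∀ A : M, Cofibrant A → μ₁.app A = μ₂.app A := by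
    intro A hA
    haveI : IsIso (γN.map (F.map (repMap A))) :=
      Localization.inverts γN (weq N) _
        (hF _ (repMap_weq A) (repObj_cofibrant A) hA)
    have hA' := congrArg (fun t => NatTrans.app t A) h
    dsimp [derivedPreCounit] at hA'
    exact (cancel_mono (γN.map (F.map (repMap A)))).1 hA'
  ext X
  haveI : IsIso (γM.map (repMap X)) :=
    Localization.inverts γM (weq M) _ (repMap_weq X)
  have h1 := μ₁.naturality (repMap X)
  have h2 := μ₂.naturality (repMap X)
  dsimp at h1 h2
  haveI : IsIso (E''.map (γM.map (repMap X))) := inferInstance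
  rw [← cancel_epi (E''.map (γM.map (repMap X))), h1, h2,
    hcof (repObj X) (repObj_cofibrant X)]

/-- The counit of any right Kan extension of `F ⋙ γN` along `γM` is an isomorphism
at cofibrant objects. -/
lemma isIso_counit_app_of_cofibrant (F : M ⥤ N)
    (hF : ∀ {X Y : M} (w : X ⟶ Y), weq M w → Cofibrant X → Cofibrant Y →
      weq N (F.map w))
    (LF : HM ⥤ HN) (α : γM ⋙ LF ⟶ F ⋙ γN) [LF.IsRightKanExtension α]
    {X : M} (hX : Cofibrant X) : IsIso (α.app X) := by
  set D := derivedPre γN F hF with hD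
  set η := derivedPreCounit γN F hF with hη
  have hinv := derivedPre_inverts γN F hF
  let E : HM ⥤ HN := Localization.lift D hinv γM
  let e : γM ⋙ E ≅ D := Localization.Lifting.iso γM (weq M) D E
  let ε : γM ⋙ E ⟶ F ⋙ γN := e.hom ≫ η
  obtain ⟨μ, hμ⟩ := derived_desc γN γM F hF LF α
  haveI := Localization.full_whiskeringLeft γM (weq M) HN
  obtain ⟨δ', hδ'⟩ := ((Functor.whiskeringLeft M HM HN).obj γM).map_surjective (μ ≫ e.inv)
  have hδ'w : CategoryTheory.Functor.whiskerLeft γM δ' = μ ≫ e.inv := hδ'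
  have hδ'ε : CategoryTheory.Functor.whiskerLeft γM δ' ≫ ε = α := by
    rw [hδ'w]
    show (μ ≫ e.inv) ≫ e.hom ≫ η = α
    rw [Category.assoc, Iso.inv_hom_id_assoc, hμ]
  let δ : E ⟶ LF := LF.liftOfIsRightKanExtension α E ε
  have hδ : CategoryTheory.Functor.whiskerLeft γM δ ≫ α = ε :=
    LF.liftOfIsRightKanExtension_fac α E ε
  have h1 : δ' ≫ δ = 𝟙 LF := by
    apply LF.hom_ext_of_isRightKanExtension α
    rw [Functor.whiskerLeft_comp, Category.assoc, hδ, hδ'ε, Functor.whiskerLeft_id', Category.id_comp]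
  have h2 : δ ≫ δ' = 𝟙 E := by
    have hu := derived_desc_unique γN γM F hF E
      (CategoryTheory.Functor.whiskerLeft γM (δ ≫ δ') ≫ e.hom)
      (CategoryTheory.Functor.whiskerLeft γM (𝟙 E) ≫ e.hom) ?_
    · have hw : CategoryTheory.Functor.whiskerLeft γM (δ ≫ δ') =
          CategoryTheory.Functor.whiskerLeft γM (𝟙 E) :=
        (cancel_mono e.hom).1 hu
      apply Localization.natTrans_ext γM (weq M)
      intro Y
      exact congrArg (fun t => NatTrans.app t Y) hw
    · rw [Functor.whiskerLeft_comp, Category.assoc, Category.assoc, Category.assoc]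
      have : e.hom ≫ η = ε := rfl
      rw [this, hδ'ε, hδ, Functor.whiskerLeft_id', Category.id_comp]
  haveI : IsIso δ' := ⟨δ, h1, h2⟩
  have happ : α.app X = δ'.app (γM.obj X) ≫ ε.app X := by
    rw [← hδ'ε]; rfl
  rw [happ]
  haveI : IsIso (ε.app X) := by
    have : ε.app X = e.hom.app X ≫ γN.map (F.map (repMap X)) := rfl
    rw [this]
    haveI : IsIso (γN.map (F.map (repMap X))) :=
      Localization.inverts γN (weq N) _
        (hF _ (repMap_weq X) (repObj_cofibrant X) hX)
    exact IsIso.comp_isIso' (e.app X).isIso_hom this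
  infer_instance

end Aux

/-- If `τ : F ⟶ G` is a left Quillen homotopy between left Brown functors (its components
at cofibrant objects are weak equivalences), and `(LF, α)`, `(LG, β)` are total left derived
functors (right Kan extensions of `F ⋙ γ_N`, `G ⋙ γ_N` along `γ_M`), then the unique
induced natural transformation `Lτ : LF ⟶ LG` with
`whiskerLeft γ_M Lτ ≫ β = α ≫ whiskerRight τ γ_N` is a natural isomorphism. -/
theorem leftQuillenHomotopy_derived_isIso
    {M : Type u₁} [Category.{v₁} M] [ModelCategory M]
    {N : Type u₂} [Category.{v₂} N] [ModelCategory N]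
    {HM : Type u₃} [Category.{v₃} HM] (γM : M ⥤ HM) [γM.IsLocalization (weq M)]
    {HN : Type u₄} [Category.{v₄} HN] (γN : N ⥤ HN) [γN.IsLocalization (weq N)]
    (F G : M ⥤ N)
    (hF : ∀ {X Y : M} (w : X ⟶ Y), weq M w → Cofibrant X → Cofibrant Y →
      weq N (F.map w))
    (hG : ∀ {X Y : M} (w : X ⟶ Y), weq M w → Cofibrant X → Cofibrant Y →
      weq N (G.map w))
    (τ : F ⟶ G) (hτ : ∀ X : M, Cofibrant X → weq N (τ.app X))
    (LF : HM ⥤ HN) (α : γM ⋙ LF ⟶ F ⋙ γN) [LF.IsRightKanExtension α]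
    (LG : HM ⥤ HN) (β : γM ⋙ LG ⟶ G ⋙ γN) [LG.IsRightKanExtension β]
    (Lτ : LF ⟶ LG)
    (hLτ : CategoryTheory.Functor.whiskerLeft γM Lτ ≫ β = α ≫ CategoryTheory.Functor.whiskerRight τ γN) :
    IsIso Lτ := by
  have hα : ∀ X : M, Cofibrant X → IsIso (α.app X) :=
    fun X hX => isIso_counit_app_of_cofibrant γN γM F hF LF α hX
  have hβ : ∀ X : M, Cofibrant X → IsIso (β.app X) :=
    fun X hX => isIso_counit_app_of_cofibrant γN γM G hG LG β hX
  have hrep : ∀ X : M, IsIso (Lτ.app (γM.obj X)) := by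
    intro X
    have hcof := repObj_cofibrant X
    haveI h1 := hα _ hcof
    haveI h2 := hβ _ hcof
    haveI h3 : IsIso (γN.map (τ.app (repObj X))) :=
      Localization.inverts γN (weq N) _ (hτ _ hcof)
    have hL := congrArg (fun t => NatTrans.app t (repObj X)) hLτ
    dsimp at hL
    have h4 : IsIso (Lτ.app (γM.obj (repObj X))) := by
      have : Lτ.app (γM.obj (repObj X)) =
          (α.app (repObj X) ≫ γN.map (τ.app (repObj X))) ≫ inv (β.app (repObj X)) :=
        (IsIso.eq_comp_inv _).mpr hL
      rw [this]
      infer_instance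
    haveI h5 : IsIso (γM.map (repMap X)) :=
      Localization.inverts γM (weq M) _ (repMap_weq X)
    have hn := Lτ.naturality (γM.map (repMap X))
    have : Lτ.app (γM.obj X) =
        inv (LF.map (γM.map (repMap X))) ≫ Lτ.app (γM.obj (repObj X)) ≫
          LG.map (γM.map (repMap X)) := by
      rw [IsIso.eq_inv_comp, ← hn]
    rw [this]
    haveI := h4
    infer_instance
  haveI : ∀ h : HM, IsIso (Lτ.app h) := by
    intro hobj
    haveI := Localization.essSurj γM (weq M)
    let e := γM.objObjPreimageIso hobj
    haveI := hrep (γM.objPreimage hobj)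
    have hn := Lτ.naturality e.hom
    have : Lτ.app hobj =
        inv (LF.map e.hom) ≫ Lτ.app (γM.obj (γM.objPreimage hobj)) ≫ LG.map e.hom := by
      rw [IsIso.eq_inv_comp, ← hn]
    rw [this]
    infer_instance
  exact NatIso.isIso_of_isIso_app Lτ

end ModelCategoryStatement
end
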